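/- Let G be a Wheeler graph with a vertex identifier assignment id: V → {0,...,n-1} and a decomposition D of G into edge-disjoint directed paths whose internal vertices have in- and out-degree exactly 1, such that whenever (u,v) is an edge and neither u nor v is an endpoint of a path in D, id(v) = id(u) + 1. Suppose vertex u (with identifier i) is immediately preceded in the Wheeler order by u' (with identifier i'), u and u' each have a unique outgoing edge, (u,v) and (u',v') respectively, both edges carry the same label, v and v' each have in-degree exactly 1, and none of u, u', v, v' is an endpoint of a path in D. Then v (with identifier i+1) is immediately preceded in the Wheeler order by v' (with identifier i'+1); i.e., φ(i+1) = φ(i) + 1, where φ maps a vertex's identifier to the identifier of its immediate predecessor in the Wheeler order. -/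

import Mathlib

/-- A Wheeler graph: a directed multigraph with vertex set `V`, edge set `E`,
edge labels in a totally ordered alphabet `A`, whose (total) Wheeler order on
the vertices satisfies: vertices of in-degree 0 precede those of positive
in-degree, and for edges `e`, `e'` with labels `a`, `a'`:
if `a ≺ a'` then `tgt e < tgt e'`; if `a = a'` and `src e < src e'` then
`tgt e ≤ tgt e'`. -/
structure WheelerGraph (V E A : Type) [LinearOrder V] [LinearOrder A] where
  src : E → V
  tgt : E → V
  lab : E → A
  indeg0_first : ∀ v w : V, (¬ ∃ e, tgt e = v) → (∃ e, tgt e = w) → v < w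
  mono_lt : ∀ e e' : E, lab e < lab e' → tgt e < tgt e'
  mono_eq : ∀ e e' : E, lab e = lab e' → src e < src e' → tgt e ≤ tgt e'

/-- `G.Reach P v` : vertex `v` is reachable by a directed path labelled `P`
(every vertex is reachable by the empty path; backward-search semantics:
`v` is reachable by `a :: Q` iff `v` is the target of an `a`-labelled edge
whose source is reachable by `Q`). -/
inductive WheelerGraph.Reach {V E A : Type} [LinearOrder V] [LinearOrder A]
    (G : WheelerGraph V E A) : List A → V → Prop
  | nil (v : V) : WheelerGraph.Reach G [] v
  | cons (e : E) {Q : List A} : WheelerGraph.Reach G Q (G.src e) →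
      WheelerGraph.Reach G (G.lab e :: Q) (G.tgt e)

/-- `u'` immediately precedes `u` in the Wheeler order. -/
def ImmPred {V : Type} [LinearOrder V] (u' u : V) : Prop :=
  u' < u ∧ ¬ ∃ w, u' < w ∧ w < u

/-!
Equal labels make the Wheeler order on targets follow the order on sources. Any vertex `w`
strictly between `v'` and `v` has positive in-degree, so it is the target of an edge `f`;
the label monotonicity axioms force `f` to carry the common label of `e` and `e'`, and then
force its source to lie between `u'` and `u`. Since `u` and `u'` have only the out-edges
`e` and `e'`, the source of `f` lies strictly between them, contradicting `ImmPred u' u`.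
Strictness `v' < v` comes from `v` having in-degree one.
-/

namespace WheelerGraph

variable {V E A : Type} [LinearOrder V] [LinearOrder A] (G : WheelerGraph V E A)

theorem exists_tgt_eq_of_tgt_lt {e : E} {w : V} (h : G.tgt e < w) : ∃ f, G.tgt f = w := by
  by_contra hw
  exact (G.indeg0_first w (G.tgt e) hw ⟨e, rfl⟩).not_gt h

theorem lab_le_of_tgt_le {e f : E} (h : G.tgt e ≤ G.tgt f) : G.lab e ≤ G.lab f :=
  not_lt.1 fun hlt => (G.mono_lt f e hlt).not_ge h

theorem src_le_of_tgt_lt {e f : E} (hlab : G.lab e = G.lab f) (h : G.tgt e < G.tgt f) :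
    G.src e ≤ G.src f :=
  not_lt.1 fun hlt => (G.mono_eq f e hlab.symm hlt).not_gt h

theorem tgt_lt_of_src_lt {e e' : E} (hlab : G.lab e' = G.lab e) (hsrc : G.src e' < G.src e)
    (hin : ∀ f : E, G.tgt f = G.tgt e → f = e) : G.tgt e' < G.tgt e := by
  refine (G.mono_eq e' e hlab hsrc).lt_of_ne fun htgt => hsrc.ne ?_
  rw [hin e' htgt]

theorem immPred_tgt_of_immPred_src {e e' : E} (hpred : ImmPred (G.src e') (G.src e))
    (huniq : ∀ f : E, G.src f = G.src e → f = e)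
    (huniq' : ∀ f : E, G.src f = G.src e' → f = e')
    (hlab : G.lab e = G.lab e') (hin : ∀ f : E, G.tgt f = G.tgt e → f = e) :
    ImmPred (G.tgt e') (G.tgt e) := by
  refine ⟨G.tgt_lt_of_src_lt hlab.symm hpred.1 hin, ?_⟩
  rintro ⟨w, hw', hw⟩
  obtain ⟨f, rfl⟩ := G.exists_tgt_eq_of_tgt_lt hw'
  have hlabf : G.lab f = G.lab e :=
    (G.lab_le_of_tgt_le hw.le).antisymm (hlab ▸ G.lab_le_of_tgt_le hw'.le)
  have hsrc' : G.src e' < G.src f := by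
    refine (G.src_le_of_tgt_lt (hlab ▸ hlabf.symm) hw').lt_of_ne fun hsrc => hw'.ne ?_
    rw [huniq' f hsrc.symm]
  have hsrc : G.src f < G.src e := by
    refine (G.src_le_of_tgt_lt hlabf hw).lt_of_ne fun hsrc => hw.ne ?_
    rw [huniq f hsrc]
  exact hpred.2 ⟨G.src f, hsrc', hsrc⟩

end WheelerGraph

theorem wheeler_phi_step_general {V E A : Type} [LinearOrder V] [LinearOrder A]
    (G : WheelerGraph V E A) (ident : V → ℕ)
    (Endp : Set V)
    (hid : ∀ e : E, G.src e ∉ Endp → G.tgt e ∉ Endp →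
      ident (G.tgt e) = ident (G.src e) + 1)
    (u u' : V) (e e' : E)
    (hpred : ImmPred u' u)
    (hsrce : G.src e = u) (huniq : ∀ f : E, G.src f = u → f = e)
    (hsrce' : G.src e' = u') (huniq' : ∀ f : E, G.src f = u' → f = e')
    (hlab : G.lab e = G.lab e')
    (hin : ∀ f : E, G.tgt f = G.tgt e → f = e)
    (hu : u ∉ Endp) (hu' : u' ∉ Endp)
    (hv : G.tgt e ∉ Endp) (hv' : G.tgt e' ∉ Endp) :
    ImmPred (G.tgt e') (G.tgt e) ∧
      ident (G.tgt e) = ident u + 1 ∧ ident (G.tgt e') = ident u' + 1 := by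
  subst hsrce hsrce'
  exact ⟨G.immPred_tgt_of_immPred_src hpred huniq huniq' hlab hin, hid e hu hv, hid e' hu' hv'⟩

/-- with identifiers assigned so that `id (tgt e) = id (src e) + 1`
whenever neither endpoint of the edge `e` is an endpoint of a path of the
decomposition `D` (whose endpoints form the set `Endp`): if `u'` immediately
precedes `u`, `u` and `u'` have unique outgoing edges `e = (u,v)`,
`e' = (u',v')` with the same label, `v` and `v'` have in-degree exactly 1,
and none of `u, u', v, v'` is an endpoint of a path in `D`, then `v'`
immediately precedes `v`, `id v = id u + 1` and `id v' = id u' + 1`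
(i.e. `φ (i + 1) = φ i + 1`). -/
theorem wheeler_phi_step {V E A : Type} [LinearOrder V] [LinearOrder A]
    (G : WheelerGraph V E A) (n : ℕ) (ident : V → ℕ)
    (hinj : Function.Injective ident) (hrange : ∀ v : V, ident v < n)
    (Endp : Set V)
    (hid : ∀ e : E, G.src e ∉ Endp → G.tgt e ∉ Endp →
      ident (G.tgt e) = ident (G.src e) + 1)
    (u u' : V) (e e' : E)
    (hpred : ImmPred u' u)
    (hsrce : G.src e = u) (huniq : ∀ f : E, G.src f = u → f = e)
    (hsrce' : G.src e' = u') (huniq' : ∀ f : E, G.src f = u' → f = e')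
    (hlab : G.lab e = G.lab e')
    (hin : ∀ f : E, G.tgt f = G.tgt e → f = e)
    (hin' : ∀ f : E, G.tgt f = G.tgt e' → f = e')
    (hu : u ∉ Endp) (hu' : u' ∉ Endp)
    (hv : G.tgt e ∉ Endp) (hv' : G.tgt e' ∉ Endp) :
    ImmPred (G.tgt e') (G.tgt e) ∧
      ident (G.tgt e) = ident u + 1 ∧ ident (G.tgt e') = ident u' + 1 :=
  wheeler_phi_step_general G ident Endp hid u u' e e' hpred hsrce huniq hsrce' huniq' hlab hin hu
    hu' hv hv'
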